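/- arXiv:2201.07595 — 2 statements merged into one kernel-verified Lean document; each statement's English description precedes it below -/
import Mathlib

section
/- Let d ≥ 1 and k > d be integers and let G be a finite simple graph that is d-degenerate. Then the Kempe graph K_k(G) is connected; that is, for any two proper k-colorings α and β of G there is a finite sequence of Kempe changes transforming α into β. -/
/-!
Induction on the vertex set. Remove a vertex `v` with at most `d < k` neighbours, connect the
two colorings on the rest by induction, and lift each Kempe change of `G - v` to `G`. A change
in colors `a`, `b` on a chain `C` lifts verbatim unless `v` has `a/b`-neighbours both inside and
outside `C`. Then `v` has two neighbours colored `a` or `b`, so among its fewer than `k`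
neighbours some color `c ∉ {a, b}` is missing, and recoloring `v` to `c` first (a Kempe change
on the chain `{v}`) takes `v` out of every `a/b` chain. In the end only `v` can differ from the
target coloring, and its target color is absent from its neighbourhood.
-/

/-- `φ` is a proper `k`-coloring of `G`: adjacent vertices get different colors. -/
def IsProperColoring {V : Type*} (G : SimpleGraph V) (k : ℕ) (φ : V → Fin k) : Prop :=
  ∀ ⦃u v : V⦄, G.Adj u v → φ u ≠ φ v

/-- The spanning subgraph of `G` keeping only edges between vertices colored `a` or `b`:
its connected components meeting the `a/b`-colored vertices are the Kempe chains. -/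
def kempeSub {V : Type*} (G : SimpleGraph V) {k : ℕ} (φ : V → Fin k) (a b : Fin k) :
    SimpleGraph V where
  Adj x y := G.Adj x y ∧ (φ x = a ∨ φ x = b) ∧ (φ y = a ∨ φ y = b)
  symm := ⟨fun x y ⟨h, hx, hy⟩ => ⟨h.symm, hy, hx⟩⟩
  loopless := ⟨fun x h => h.1.ne rfl⟩

/-- `ψ` is obtained from `φ` by a single Kempe change in the pair of colors `{a, b}`:
the colors `a` and `b` are swapped on the Kempe chain containing some vertex `v`
colored `a` or `b`, and all other vertices keep their color. -/
def KempeStepAB {V : Type*} (G : SimpleGraph V) {k : ℕ} (a b : Fin k) (φ ψ : V → Fin k) :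
    Prop :=
  a ≠ b ∧ ∃ v : V, (φ v = a ∨ φ v = b) ∧
    (∀ u : V, (kempeSub G φ a b).Reachable v u → ψ u = Equiv.swap a b (φ u)) ∧
    (∀ u : V, ¬ (kempeSub G φ a b).Reachable v u → ψ u = φ u)

/-- `ψ` is obtained from `φ` by a single Kempe change (in some pair of colors). -/
def KempeStep {V : Type*} (G : SimpleGraph V) (k : ℕ) (φ ψ : V → Fin k) : Prop :=
  ∃ a b : Fin k, KempeStepAB G a b φ ψ

/-- `G` is `d`-degenerate: every (finite, nonempty) subgraph has a vertex of degree
at most `d`, i.e. every finite nonempty vertex subset `S` contains a vertex with at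
most `d` neighbors inside `S`. -/
def Degenerate {V : Type*} (d : ℕ) (G : SimpleGraph V) : Prop :=
  ∀ S : Set V, S.Finite → S.Nonempty → ∃ v ∈ S, {u ∈ S | G.Adj v u}.ncard ≤ d

namespace SimpleGraph

variable {V : Type*}

theorem Reachable.mem_of_adj_closed {H : SimpleGraph V} {R : Set V}
    (hR : ∀ ⦃x y⦄, x ∈ R → H.Adj x y → y ∈ R) {x y : V} (h : H.Reachable x y) (hx : x ∈ R) :
    y ∈ R := by
  obtain ⟨p⟩ := h
  induction p with
  | nil => exact hx
  | cons hadj _ ih => exact ih (hR hx hadj)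

theorem reachable_iff_of_adj_of_ne {K K' : SimpleGraph V} {v w u : V} (hle : K' ≤ K)
    (hadj : ∀ ⦃x y⦄, K.Adj x y → x ≠ v → y ≠ v → K'.Adj x y)
    (hv : ∀ ⦃y z⦄, K.Adj v y → K.Adj v z → K'.Reachable w y → K'.Reachable w z)
    (hw : w ≠ v) (hu : u ≠ v) : K.Reachable w u ↔ K'.Reachable w u := by
  refine ⟨fun h => ?_, fun h => h.mono hle⟩
  let R : Set V :=
    {x | (x ≠ v → K'.Reachable w x) ∧ (x = v → ∃ y, K.Adj v y ∧ K'.Reachable w y)}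
  have hR : ∀ ⦃x y⦄, x ∈ R → K.Adj x y → y ∈ R := by
    intro x y ⟨hxR, hvR⟩ hxy
    by_cases hx : x = v
    · subst hx
      obtain ⟨y₀, hy₀, hwy₀⟩ := hvR rfl
      exact ⟨fun _ => hv hy₀ hxy hwy₀, fun hy => absurd (hy ▸ hxy) (K.loopless.irrefl _)⟩
    · refine ⟨fun hy => (hxR hx).trans (hadj hxy hx hy).reachable, fun hy => ?_⟩
      exact ⟨x, hy ▸ hxy.symm, hxR hx⟩
  exact (h.mem_of_adj_closed hR ⟨fun _ => .rfl, fun h => absurd h hw⟩).1 hu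

theorem spanningCoe_induce_adj {G : SimpleGraph V} {S : Set V} {x y : V} :
    (G.induce S).spanningCoe.Adj x y ↔ G.Adj x y ∧ x ∈ S ∧ y ∈ S := by
  simp only [map_adj, comap_adj, Function.Embedding.subtype_apply, Subtype.exists,
    exists_and_left, exists_prop, ↓existsAndEq, and_true, true_and]

theorem spanningCoe_induce_mono {G : SimpleGraph V} {S T : Set V} (h : S ⊆ T) :
    (G.induce S).spanningCoe ≤ (G.induce T).spanningCoe := fun _ _ hxy => by
  rw [spanningCoe_induce_adj] at hxy ⊢
  exact ⟨hxy.1, h hxy.2.1, h hxy.2.2⟩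

end SimpleGraph

section

open SimpleGraph Function

variable {V : Type*} {k : ℕ} {G H : SimpleGraph V} {φ ψ γ τ : V → Fin k} {a b c : Fin k}
  {S : Set V} {v w : V}

theorem IsProperColoring.mono (h : G ≤ H) (hφ : IsProperColoring H k φ) :
    IsProperColoring G k φ :=
  fun _ _ huv => hφ (h huv)

theorem color_of_kempeSub_reachable {u : V} (hv : φ v = a ∨ φ v = b)
    (h : (kempeSub G φ a b).Reachable v u) : φ u = a ∨ φ u = b :=
  h.mem_of_adj_closed (R := {u | φ u = a ∨ φ u = b})
    (fun _ _ _ (hxy : (kempeSub G φ a b).Adj _ _) => hxy.2.2) hv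

theorem swap_apply_mem_pair (h : c = a ∨ c = b) :
    Equiv.swap a b c = a ∨ Equiv.swap a b c = b := by
  rcases h with rfl | rfl <;> simp

open Classical in
noncomputable def kempeSwap (G : SimpleGraph V) (φ : V → Fin k) (a b : Fin k) (v : V) :
    V → Fin k :=
  fun u => if (kempeSub G φ a b).Reachable v u then Equiv.swap a b (φ u) else φ u

theorem kempeStepAB_iff :
    KempeStepAB G a b φ ψ ↔
      a ≠ b ∧ ∃ v, (φ v = a ∨ φ v = b) ∧ ψ = kempeSwap G φ a b v := by
  refine ⟨fun ⟨hab, v, hv, hin, hout⟩ => ⟨hab, v, hv, funext fun u => ?_⟩, ?_⟩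
  · unfold kempeSwap
    split_ifs with hu
    exacts [hin u hu, hout u hu]
  · rintro ⟨hab, v, hv, rfl⟩
    exact ⟨hab, v, hv, fun u hu => if_pos hu, fun u hu => if_neg hu⟩

theorem IsProperColoring.of_kempeStepAB (hφ : IsProperColoring G k φ)
    (h : KempeStepAB G a b φ ψ) : IsProperColoring G k ψ := by
  obtain ⟨-, v, hv, rfl⟩ := kempeStepAB_iff.mp h
  have across : ∀ ⦃x y⦄, G.Adj x y → (kempeSub G φ a b).Reachable v x →
      ¬ (kempeSub G φ a b).Reachable v y → kempeSwap G φ a b v x ≠ kempeSwap G φ a b v y := by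
    intro x y hxy hx hy
    have hxc := color_of_kempeSub_reachable hv hx
    have hyc : ¬ (φ y = a ∨ φ y = b) := fun hyc => hy (hx.trans (Adj.reachable ⟨hxy, hxc, hyc⟩))
    simp only [kempeSwap, if_pos hx, if_neg hy]
    rintro heq
    exact hyc (heq ▸ swap_apply_mem_pair hxc)
  intro x y hxy
  by_cases hx : (kempeSub G φ a b).Reachable v x <;>
    by_cases hy : (kempeSub G φ a b).Reachable v y
  · simpa [kempeSwap, hx, hy] using hφ hxy
  · exact across hxy hx hy
  · exact (across hxy.symm hy hx).symm
  · simpa [kempeSwap, hx, hy] using hφ hxy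

theorem IsProperColoring.of_kempeStep (hφ : IsProperColoring G k φ) (h : KempeStep G k φ ψ) :
    IsProperColoring G k ψ :=
  let ⟨_, _, hab⟩ := h
  hφ.of_kempeStepAB hab

theorem kempeStepAB_update [DecidableEq V] (hφ : IsProperColoring G k φ) (hc : φ v ≠ c)
    (hfree : ∀ u, G.Adj v u → φ u ≠ c) :
    KempeStepAB G (φ v) c φ (update φ v c) := by
  have hchain : ∀ u, (kempeSub G φ (φ v) c).Reachable v u → u = v := fun u h =>
    h.mem_of_adj_closed (R := {v}) (fun x y hx hxy => by
      subst hx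
      rcases hxy.2.2 with h | h
      exacts [absurd h.symm (hφ hxy.1), absurd h (hfree y hxy.1)]) rfl
  refine ⟨hc, v, Or.inl rfl, fun u hu => ?_, fun u hu => ?_⟩
  · obtain rfl := hchain u hu
    simp
  · exact update_of_ne (by rintro rfl; exact hu .rfl) _ _

def KempeStepOn (G : SimpleGraph V) (k : ℕ) (S : Set V) (φ ψ : V → Fin k) : Prop :=
  KempeStep (G.induce S).spanningCoe k φ ψ ∧ ∀ x ∉ S, ψ x = φ x

theorem IsProperColoring.of_reflTransGen_kempeStepOn
    (hφ : IsProperColoring (G.induce S).spanningCoe k φ)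
    (h : Relation.ReflTransGen (KempeStepOn G k S) φ ψ) :
    IsProperColoring (G.induce S).spanningCoe k ψ := by
  induction h with
  | refl => exact hφ
  | tail _ hst ih => exact ih.of_kempeStep hst.1

theorem kempeStepOn_kempeSwap (hab : a ≠ b) (hwS : w ∈ S) (hw : φ w = a ∨ φ w = b) :
    KempeStepOn G k S φ (kempeSwap (G.induce S).spanningCoe φ a b w) := by
  refine ⟨⟨a, b, kempeStepAB_iff.mpr ⟨hab, w, hw, rfl⟩⟩, fun x hx => if_neg fun h => hx ?_⟩
  exact h.mem_of_adj_closed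
    (fun _ _ _ (hxy : (kempeSub _ φ a b).Adj _ _) => (spanningCoe_induce_adj.mp hxy.1).2.2) hwS

theorem kempeStepOn_update [DecidableEq V] (hφ : IsProperColoring (G.induce S).spanningCoe k φ)
    (hv : v ∈ S) (hc : φ v ≠ c) (hfree : ∀ u ∈ S, G.Adj v u → φ u ≠ c) :
    KempeStepOn G k S φ (update φ v c) := by
  refine ⟨⟨_, _, kempeStepAB_update hφ hc fun u hu => ?_⟩, fun x hx => ?_⟩
  · rw [spanningCoe_induce_adj] at hu
    exact hfree u hu.2.2 hu.1
  · exact update_of_ne (by rintro rfl; exact hx hv) _ _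

theorem exists_color_notMem_of_ncard_lt {N : Set V} (hNfin : N.Finite) (hN : N.ncard < k)
    {y z : V} (hy : y ∈ N) (hz : z ∈ N) (hyz : y ≠ z)
    (hyc : γ y = a ∨ γ y = b) (hzc : γ z = a ∨ γ z = b) :
    ∃ c, c ≠ a ∧ c ≠ b ∧ ∀ u ∈ N, γ u ≠ c := by
  set M := N \ {y, z}
  have hM : M.ncard + 2 = N.ncard := by
    rw [← Set.ncard_pair hyz]
    exact Set.ncard_sdiff_add_ncard_of_subset (Set.pair_subset hy hz) hNfin
  have hcard : ({a, b} ∪ γ '' M).ncard < (Set.univ : Set (Fin k)).ncard := calc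
    ({a, b} ∪ γ '' M).ncard ≤ ({a, b} : Set (Fin k)).ncard + (γ '' M).ncard :=
      Set.ncard_union_le _ _
    _ ≤ 2 + M.ncard := by
      gcongr
      · exact (Set.ncard_insert_le _ _).trans (by simp)
      · exact Set.ncard_image_le (hNfin.subset Set.sdiff_subset)
    _ < (Set.univ : Set (Fin k)).ncard := by
      rw [Set.ncard_univ, Nat.card_eq_fintype_card, Fintype.card_fin]
      omega
  obtain ⟨c, -, hc⟩ := Set.exists_mem_notMem_of_ncard_lt_ncard hcard
  simp only [Set.mem_union, Set.mem_insert_iff, Set.mem_singleton_iff, Set.mem_image,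
    not_or, not_exists, not_and] at hc
  obtain ⟨⟨hca, hcb⟩, hcM⟩ := hc
  refine ⟨c, hca, hcb, fun u hu hcu => ?_⟩
  by_cases huyz : u = y ∨ u = z
  · rcases huyz with rfl | rfl
    · rcases hyc with h | h <;> simp_all
    · rcases hzc with h | h <;> simp_all
  · exact hcM u ⟨hu, by simpa using huyz⟩ hcu

theorem kempeSub_spanningCoe_induce_sdiff_le (hagree : ∀ x ≠ v, γ x = τ x) :
    kempeSub (G.induce (S \ {v})).spanningCoe τ a b ≤ kempeSub (G.induce S).spanningCoe γ a b :=
  fun x y ⟨hxy, hxc, hyc⟩ => by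
    rw [spanningCoe_induce_adj] at hxy
    refine ⟨spanningCoe_induce_mono Set.sdiff_subset (spanningCoe_induce_adj.mpr hxy), ?_, ?_⟩
    · rwa [hagree x hxy.2.1.2]
    · rwa [hagree y hxy.2.2.2]

theorem kempeSub_spanningCoe_induce_sdiff_adj (hagree : ∀ x ≠ v, γ x = τ x) {x y : V}
    (hxy : (kempeSub (G.induce S).spanningCoe γ a b).Adj x y) (hx : x ≠ v) (hy : y ≠ v) :
    (kempeSub (G.induce (S \ {v})).spanningCoe τ a b).Adj x y := by
  obtain ⟨hxy, hxc, hyc⟩ := hxy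
  rw [spanningCoe_induce_adj] at hxy
  refine ⟨spanningCoe_induce_adj.mpr ⟨hxy.1, ⟨hxy.2.1, hx⟩, ⟨hxy.2.2, hy⟩⟩, ?_, ?_⟩
  · rwa [← hagree x hx]
  · rwa [← hagree y hy]

theorem kempeStepOn_kempeSwap_lift (hagree : ∀ x ≠ v, γ x = τ x) (hab : a ≠ b)
    (hwS : w ∈ S \ {v}) (hw : τ w = a ∨ τ w = b)
    (hv : ∀ ⦃y z⦄, (kempeSub (G.induce S).spanningCoe γ a b).Adj v y →
      (kempeSub (G.induce S).spanningCoe γ a b).Adj v z →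
      (kempeSub (G.induce (S \ {v})).spanningCoe τ a b).Reachable w y →
      (kempeSub (G.induce (S \ {v})).spanningCoe τ a b).Reachable w z) :
    KempeStepOn G k S γ (kempeSwap (G.induce S).spanningCoe γ a b w) ∧
      ∀ x ≠ v, kempeSwap (G.induce S).spanningCoe γ a b w x =
        kempeSwap (G.induce (S \ {v})).spanningCoe τ a b w x := by
  refine ⟨kempeStepOn_kempeSwap hab hwS.1 (hagree w hwS.2 ▸ hw), fun x hx => ?_⟩
  have hreach := reachable_iff_of_adj_of_ne (kempeSub_spanningCoe_induce_sdiff_le hagree)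
    (fun _ _ hxy => kempeSub_spanningCoe_induce_sdiff_adj hagree hxy) hv hwS.2 hx
  unfold kempeSwap
  split_ifs <;> simp_all

variable {τ' : V → Fin k}

theorem exists_lift_of_kempeStepOn [Finite V] [DecidableEq V] (hv : v ∈ S)
    (hdeg : {u ∈ S | G.Adj v u}.ncard < k)
    (hγ : IsProperColoring (G.induce S).spanningCoe k γ) (hagree : ∀ x ≠ v, γ x = τ x)
    (hstep : KempeStepOn G k (S \ {v}) τ τ') :
    ∃ γ', Relation.ReflTransGen (KempeStepOn G k S) γ γ' ∧ ∀ x ≠ v, γ' x = τ' x := by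
  obtain ⟨⟨a, b, hstep⟩, hoff⟩ := hstep
  obtain ⟨hab, w, hw, rfl⟩ := kempeStepAB_iff.mp hstep
  have hwS : w ∈ S \ {v} := by
    by_contra hwS
    have := hoff w hwS
    rw [kempeSwap, if_pos .rfl] at this
    exact Equiv.swap_apply_ne_self_iff.mpr ⟨hab, hw⟩ this
  by_cases hsplit : ∀ ⦃y z⦄, (kempeSub (G.induce S).spanningCoe γ a b).Adj v y →
      (kempeSub (G.induce S).spanningCoe γ a b).Adj v z →
      (kempeSub (G.induce (S \ {v})).spanningCoe τ a b).Reachable w y →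
      (kempeSub (G.induce (S \ {v})).spanningCoe τ a b).Reachable w z
  · obtain ⟨hlift, hagree'⟩ := kempeStepOn_kempeSwap_lift hagree hab hwS hw hsplit
    exact ⟨_, .single hlift, hagree'⟩
  -- `v` has two distinct neighbours colored `a` or `b`, so some third color is free at `v`;
  -- moving `v` to it detaches `v` from the `a`/`b` chains.
  push Not at hsplit
  obtain ⟨y, z, ⟨hy, hvc, hyc⟩, ⟨hz, -, hzc⟩, hwy, hwz⟩ := hsplit
  rw [spanningCoe_induce_adj] at hy hz
  obtain ⟨c, hca, hcb, hfree⟩ := exists_color_notMem_of_ncard_lt (Set.toFinite _) hdeg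
    ⟨hy.2.2, hy.1⟩ ⟨hz.2.2, hz.1⟩ (by rintro rfl; exact hwz hwy) hyc hzc
  have hγv : γ v ≠ c := by rcases hvc with h | h <;> rw [h] <;> symm <;> assumption
  have hagree₁ : ∀ x ≠ v, update γ v c x = τ x := fun x hx => by
    rw [update_of_ne hx, hagree x hx]
  have hrecolor := kempeStepOn_update hγ hv hγv fun u hu huv => hfree u ⟨hu, huv⟩
  obtain ⟨hlift, hagree'⟩ := kempeStepOn_kempeSwap_lift hagree₁ hab hwS hw
    fun _ _ hvy => absurd hvy.2.1 (by simp [hca, hcb])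
  exact ⟨_, .head hrecolor (.single hlift), hagree'⟩

theorem exists_lift_of_reflTransGen_kempeStepOn [Finite V] [DecidableEq V] (hv : v ∈ S)
    (hdeg : {u ∈ S | G.Adj v u}.ncard < k)
    (h : Relation.ReflTransGen (KempeStepOn G k (S \ {v})) τ τ')
    (hγ : IsProperColoring (G.induce S).spanningCoe k γ) (hagree : ∀ x ≠ v, γ x = τ x) :
    ∃ γ', Relation.ReflTransGen (KempeStepOn G k S) γ γ' ∧ ∀ x ≠ v, γ' x = τ' x := by
  induction h using Relation.ReflTransGen.head_induction_on generalizing γ with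
  | refl => exact ⟨γ, .refl, hagree⟩
  | head hstep _ ih =>
    obtain ⟨γ₁, h₁, hagree₁⟩ := exists_lift_of_kempeStepOn hv hdeg hγ hagree hstep
    obtain ⟨γ₂, h₂, hagree₂⟩ := ih (hγ.of_reflTransGen_kempeStepOn h₁) hagree₁
    exact ⟨γ₂, h₁.trans h₂, hagree₂⟩

theorem reflTransGen_kempeStepOn_of_degenerate [Finite V] {d : ℕ} (hk : d < k)
    (hG : Degenerate d G) (S : Set V) {α β : V → Fin k}
    (hα : IsProperColoring (G.induce S).spanningCoe k α)
    (hβ : IsProperColoring (G.induce S).spanningCoe k β) (hαβ : ∀ x ∉ S, α x = β x) :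
    Relation.ReflTransGen (KempeStepOn G k S) α β := by
  classical
  obtain ⟨n, hn⟩ : ∃ n, S.ncard = n := ⟨_, rfl⟩
  induction n generalizing S α β with
  | zero =>
    obtain rfl : S = ∅ := (Set.ncard_eq_zero (Set.toFinite S)).mp hn
    obtain rfl : α = β := funext fun x => hαβ x (Set.notMem_empty x)
    exact .refl
  | succ n ih =>
    obtain ⟨v, hv, hdeg⟩ := hG S (Set.toFinite S) (Set.nonempty_of_ncard_ne_zero (by omega))
    have hβ₁ : IsProperColoring (G.induce (S \ {v})).spanningCoe k (update β v (α v)) := by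
      intro x y hxy
      rw [spanningCoe_induce_adj] at hxy
      rw [update_of_ne hxy.2.1.2, update_of_ne hxy.2.2.2]
      exact hβ (spanningCoe_induce_adj.mpr ⟨hxy.1, hxy.2.1.1, hxy.2.2.1⟩)
    have hαβ₁ : ∀ x ∉ S \ {v}, α x = update β v (α v) x := by
      intro x hx
      by_cases hxv : x = v
      · simp [hxv]
      · rw [update_of_ne hxv]
        exact hαβ x fun hxS => hx ⟨hxS, hxv⟩
    have hsmall := ih (S \ {v}) (hα.mono (spanningCoe_induce_mono Set.sdiff_subset)) hβ₁ hαβ₁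
      (by rw [Set.ncard_sdiff_singleton_of_mem hv, hn]; rfl)
    obtain ⟨γ, hαγ, hγβ⟩ :=
      exists_lift_of_reflTransGen_kempeStepOn hv (hdeg.trans_lt hk) hsmall hα fun _ _ => rfl
    have hβγ : update γ v (β v) = β := by
      funext x
      by_cases hxv : x = v
      · simp [hxv]
      · rw [update_of_ne hxv, hγβ x hxv, update_of_ne hxv]
    by_cases hγv : γ v = β v
    · rwa [← hβγ, ← hγv, update_eq_self]
    refine hαγ.tail (hβγ ▸ kempeStepOn_update (hα.of_reflTransGen_kempeStepOn hαγ) hv hγv ?_)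
    intro u hu hvu
    have huv : u ≠ v := (G.ne_of_adj hvu).symm
    rw [hγβ u huv, update_of_ne huv]
    exact (hβ (spanningCoe_induce_adj.mpr ⟨hvu, hv, hu⟩)).symm

theorem Relation.ReflTransGen.exists_seq {X : Type*} {r : X → X → Prop} {a b : X}
    (h : Relation.ReflTransGen r a b) :
    ∃ (m : ℕ) (σ : ℕ → X), σ 0 = a ∧ σ m = b ∧ ∀ i < m, r (σ i) (σ (i + 1)) := by
  induction h using Relation.ReflTransGen.head_induction_on with
  | refl => exact ⟨0, fun _ => b, rfl, rfl, by simp⟩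
  | @head a c hac _ ih =>
    obtain ⟨m, σ, h0, hm, hσ⟩ := ih
    refine ⟨m + 1, fun | 0 => a | i + 1 => σ i, rfl, hm, fun i hi => ?_⟩
    cases i with
    | zero =>
      show r a (σ 0)
      rwa [h0]
    | succ i => exact hσ i (by omega)

end

theorem kempe_connected_of_degenerate_general {V : Type*} [Fintype V] (d k : ℕ)
    (hk : d < k) (G : SimpleGraph V) (hG : Degenerate d G)
    (α β : V → Fin k) (hα : IsProperColoring G k α) (hβ : IsProperColoring G k β) :
    ∃ (m : ℕ) (σ : ℕ → V → Fin k), σ 0 = α ∧ σ m = β ∧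
      (∀ i ≤ m, IsProperColoring G k (σ i)) ∧
      (∀ i < m, KempeStep G k (σ i) (σ (i + 1))) := by
  have hGS : (G.induce Set.univ).spanningCoe = G := G.spanningCoe_induce_univ
  have hαβ : Relation.ReflTransGen (KempeStep G k) α β :=
    Relation.ReflTransGen.mono (fun _ _ (h : KempeStepOn G k _ _ _) => hGS ▸ h.1) _ _ <|
      reflTransGen_kempeStepOn_of_degenerate hk hG Set.univ (by rwa [hGS]) (by rwa [hGS]) (by simp)
  obtain ⟨m, σ, h0, hm, hσ⟩ := hαβ.exists_seq
  refine ⟨m, σ, h0, hm, fun i hi => ?_, hσ⟩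
  induction i with
  | zero => exact h0 ▸ hα
  | succ i ih => exact (ih (by omega)).of_kempeStep (hσ i hi)

/-- If `G` is a finite `d`-degenerate simple graph with `d ≥ 1` and
`k > d`, then the Kempe graph `K_k(G)` is connected: any two proper `k`-colorings are
joined by a finite sequence of Kempe changes (all intermediate colorings being proper). -/
theorem kempe_connected_of_degenerate {V : Type*} [Fintype V] (d k : ℕ)
    (hd : 1 ≤ d) (hk : d < k) (G : SimpleGraph V) (hG : Degenerate d G)
    (α β : V → Fin k) (hα : IsProperColoring G k α) (hβ : IsProperColoring G k β) :
    ∃ (m : ℕ) (σ : ℕ → V → Fin k), σ 0 = α ∧ σ m = β ∧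
      (∀ i ≤ m, IsProperColoring G k (σ i)) ∧
      (∀ i < m, KempeStep G k (σ i) (σ (i + 1))) :=
  kempe_connected_of_degenerate_general d k hk G hG α β hα hβ
end

section
/- Let G be a finite simple graph on n ≥ 1 vertices with fewer than 3n edges, let α be a proper 5-coloring of G and let β be a proper 4-coloring of G. Then there exists an independent set I of G such that: every vertex of I has degree at most 6 in G; I is contained in a single color class of α and in a single color class of β; and |I| ≥ n/140. -/
/-- If `G` is a finite graph on `n ≥ 1` vertices with fewer than `3n`
edges, `α` a proper `5`-coloring and `β` a proper `4`-coloring of `G`, then there is an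
independent set `I` of vertices of degree at most `6`, contained in a single color class
of `α` and in a single color class of `β`, with `|I| ≥ n / 140`. -/
theorem exists_good_independent_set {V : Type*} [Fintype V] [DecidableEq V]
    (G : SimpleGraph V) [DecidableRel G.Adj] (hn : 1 ≤ Fintype.card V)
    (he : G.edgeFinset.card < 3 * Fintype.card V)
    (α : V → Fin 5) (β : V → Fin 4)
    (hα : IsProperColoring G 5 α) (hβ : IsProperColoring G 4 β) :
    ∃ I : Finset V,
      (∀ u ∈ I, ∀ w ∈ I, u ≠ w → ¬ G.Adj u w) ∧
      (∀ v ∈ I, G.degree v ≤ 6) ∧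
      (∃ c : Fin 5, ∀ v ∈ I, α v = c) ∧
      (∃ c : Fin 4, ∀ v ∈ I, β v = c) ∧
      (Fintype.card V : ℝ) / 140 ≤ (I.card : ℝ) := by
  classical
  set n := Fintype.card V with hncard
  set S : Finset V := Finset.univ.filter (fun v => G.degree v ≤ 6) with hS
  -- 7 * S.card > n
  have hsumdeg : ∑ v, G.degree v = 2 * G.edgeFinset.card := by
    simpa using G.sum_degrees_eq_twice_card_edges
  set T : Finset V := Finset.univ.filter (fun v => ¬ G.degree v ≤ 6) with hT
  have hST : S.card + T.card = n := by
    simpa [hS, hT] using Finset.card_filter_add_card_filter_not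
      (s := (Finset.univ : Finset V)) (p := fun v => G.degree v ≤ 6)
  have h7T : 7 * T.card ≤ ∑ v, G.degree v := by
    calc 7 * T.card = ∑ _v ∈ T, 7 := by
          rw [Finset.sum_const]; ring
      _ ≤ ∑ v ∈ T, G.degree v := by
          apply Finset.sum_le_sum
          intro v hv
          have := (Finset.mem_filter.mp hv).2
          omega
      _ ≤ ∑ v, G.degree v := Finset.sum_le_sum_of_subset (Finset.filter_subset _ _)
  have hnS : n < 7 * S.card := by omega
  -- pigeonhole over the 20 color pairs
  set f : V → Fin 5 × Fin 4 := fun v => (α v, β v) with hf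
  have hfib : S.card = ∑ b ∈ (Finset.univ : Finset (Fin 5 × Fin 4)),
      (S.filter fun a => f a = b).card :=
    Finset.card_eq_sum_card_fiberwise (fun x _ => Finset.mem_univ (f x))
  have hsum : ∑ b ∈ (Finset.univ : Finset (Fin 5 × Fin 4)), S.card ≤
      ∑ b ∈ (Finset.univ : Finset (Fin 5 × Fin 4)),
        20 * (S.filter fun a => f a = b).card := by
    rw [← Finset.mul_sum, ← hfib, Finset.sum_const]
    simp
  obtain ⟨b, -, hb⟩ := Finset.exists_le_of_sum_le (Finset.univ_nonempty) hsum
  refine ⟨S.filter fun a => f a = b, ?_, ?_, ?_, ?_, ?_⟩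
  · intro u hu w hw huw hadj
    have h1 : f u = b := (Finset.mem_filter.mp hu).2
    have h2 : f w = b := (Finset.mem_filter.mp hw).2
    exact hα hadj (Prod.ext_iff.mp (h1.trans h2.symm)).1
  · intro v hv
    have := Finset.mem_filter.mp (Finset.mem_filter.mp hv).1
    exact this.2
  · exact ⟨b.1, fun v hv => by
      have := (Finset.mem_filter.mp hv).2
      simpa [hf, Prod.ext_iff] using congrArg Prod.fst this⟩
  · exact ⟨b.2, fun v hv => by
      have := (Finset.mem_filter.mp hv).2
      simpa [hf, Prod.ext_iff] using congrArg Prod.snd this⟩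
  · rw [div_le_iff₀ (by norm_num)]
    have h140 : n ≤ 140 * (S.filter fun a => f a = b).card := by
      have : 7 * S.card ≤ 140 * (S.filter fun a => f a = b).card := by omega
      omega
    calc (n : ℝ) ≤ (140 * (S.filter fun a => f a = b).card : ℕ) := by exact_mod_cast h140
      _ = _ := by push_cast; ring
end
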